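/- For all integers m ≥ 0 and 0 ≤ j ≤ m: every nonzero point of the lattice Λ(m, j) has Manhattan weight at least 2ʲ, and Λ(m, j) contains a point of Manhattan weight exactly 2ʲ; that is, the minimum Manhattan distance of Λ(m, j) equals 2ʲ. -/

import Mathlib

/-- `Hmat m` : the `2^m × 2^m` matrix defined by `H₀ = [1]` and
`H_{m+1} = [[Hₘ, Hₘ], [0, Hₘ]]` in block form. -/
def Hmat : (m : ℕ) → Matrix (Fin (2 ^ m)) (Fin (2 ^ m)) ℤ
  | 0 => Matrix.of fun _ _ => 1
  | m + 1 =>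
      Matrix.reindex
        (finSumFinEquiv.trans (finCongr (by rw [pow_succ, mul_two] :
          2 ^ m + 2 ^ m = 2 ^ (m + 1))))
        (finSumFinEquiv.trans (finCongr (by rw [pow_succ, mul_two] :
          2 ^ m + 2 ^ m = 2 ^ (m + 1))))
        (Matrix.fromBlocks (Hmat m) (Hmat m) 0 (Hmat m))

/-- `Smat m` : the `2^m × 2^m` Sylvester Hadamard matrix, `𝓗₀ = [1]`,
`𝓗_{m+1} = [[𝓗ₘ, 𝓗ₘ], [𝓗ₘ, −𝓗ₘ]]`. -/
def Smat : (m : ℕ) → Matrix (Fin (2 ^ m)) (Fin (2 ^ m)) ℤ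
  | 0 => Matrix.of fun _ _ => 1
  | m + 1 =>
      Matrix.reindex
        (finSumFinEquiv.trans (finCongr (by rw [pow_succ, mul_two] :
          2 ^ m + 2 ^ m = 2 ^ (m + 1))))
        (finSumFinEquiv.trans (finCongr (by rw [pow_succ, mul_two] :
          2 ^ m + 2 ^ m = 2 ^ (m + 1))))
        (Matrix.fromBlocks (Smat m) (Smat m) (Smat m) (-(Smat m)))

/-- Hamming weight of the `s`-th row of `Hmat m`. -/
def rowWeight (m : ℕ) (s : Fin (2 ^ m)) : ℕ :=
  (Finset.univ.filter (fun t => Hmat m s t ≠ 0)).card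

/-- `Gmat m j` : the matrix whose `s`-th row is the `s`-th row of `Hmat m`
multiplied by `2^(j − ℓ)` (truncated subtraction) where `2^ℓ` is the Hamming
weight of that row. -/
def Gmat (m j : ℕ) : Matrix (Fin (2 ^ m)) (Fin (2 ^ m)) ℤ :=
  Matrix.of fun s t => (2 : ℤ) ^ (j - Nat.log 2 (rowWeight m s)) * Hmat m s t

/-- The lattice generated by the rows of `G`. -/
def latticeOf {n : ℕ} (G : Matrix (Fin n) (Fin n) ℤ) : Set (Fin n → ℤ) :=
  { x | ∃ u : Fin n → ℤ, x = Matrix.vecMul u G }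

/-!
A top-half row of `H_{m+1}` has twice the weight of the corresponding row of `Hₘ`, so
`G(m+1, j) = [[G(m, j-1), G(m, j-1)], [0, G(m, j)]]`, and `Λ(m+1, j)` is the Plotkin sum
`{(a | a + b) : a ∈ Λ(m, j-1), b ∈ Λ(m, j)}`. For such a point, either `b = 0` and the weight is
`2|a| ≥ 2·2^(j-1) ≥ 2^j`, or `|a| + |a + b| ≥ |b| ≥ 2^j`; this gives the lower bound by induction
on `m`, starting from `Λ(0, j) = 2^j ℤ`. The points `(0 | b)` and `(a | a)` realise the bound,
according as `j ≤ m` or `j = m + 1`.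
-/

open Matrix

/-- The Plotkin `(u | u + v)` construction. -/
def plotkinSum {ι : Type*} (A B : Set (ι → ℤ)) : Set (ι ⊕ ι → ℤ) :=
  {x | ∃ a ∈ A, ∃ b ∈ B, Sum.elim a (a + b) = x}

section Plotkin

variable {ι : Type*} [Fintype ι]

lemma sum_abs_sumElim (a c : ι → ℤ) :
    ∑ i, |Sum.elim a c i| = ∑ i, |a i| + ∑ i, |c i| :=
  Fintype.sum_sum_type _

theorem le_sum_abs_of_mem_plotkinSum {A B : Set (ι → ℤ)} {d : ℤ}
    (hA : ∀ a ∈ A, a ≠ 0 → d ≤ 2 * ∑ i, |a i|) (hB : ∀ b ∈ B, b ≠ 0 → d ≤ ∑ i, |b i|)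
    {x : ι ⊕ ι → ℤ} (hx : x ∈ plotkinSum A B) (hx0 : x ≠ 0) : d ≤ ∑ i, |x i| := by
  obtain ⟨a, ha, b, hb, rfl⟩ := hx
  rw [sum_abs_sumElim]
  by_cases hb0 : b = 0
  · subst hb0
    have ha0 : a ≠ 0 := by rintro rfl; exact hx0 (by simp)
    simpa [two_mul] using hA a ha ha0
  · calc d ≤ ∑ i, |b i| := hB b hb hb0
      _ ≤ ∑ i, (|a i| + |(a + b) i|) := Finset.sum_le_sum fun i _ => by
          simpa [add_comm |a i|] using abs_sub (a i + b i) (a i)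
      _ = _ := Finset.sum_add_distrib

end Plotkin

theorem mem_latticeOf_reindex_fromBlocks_iff {n k : ℕ} (e : Fin n ⊕ Fin n ≃ Fin k)
    (A B : Matrix (Fin n) (Fin n) ℤ) (x : Fin k → ℤ) :
    x ∈ latticeOf (reindex e e (fromBlocks A A 0 B)) ↔
      x ∘ e ∈ plotkinSum (latticeOf A) (latticeOf B) := by
  have hvecMul (u : Fin k → ℤ) : (u ᵥ* reindex e e (fromBlocks A A 0 B)) ∘ e =
      Sum.elim ((u ∘ e ∘ Sum.inl) ᵥ* A) ((u ∘ e ∘ Sum.inl) ᵥ* A + (u ∘ e ∘ Sum.inr) ᵥ* B) := by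
    rw [reindex_apply, submatrix_vecMul_equiv, vecMul_fromBlocks]
    ext t; cases t <;> simp [Function.comp_def]
  constructor
  · rintro ⟨u, rfl⟩
    exact ⟨_, ⟨_, rfl⟩, _, ⟨_, rfl⟩, (hvecMul u).symm⟩
  · rintro ⟨_, ⟨u, rfl⟩, _, ⟨v, rfl⟩, hx⟩
    refine ⟨Sum.elim u v ∘ e.symm, e.surjective.injective_comp_right ?_⟩
    change x ∘ e = (_ ᵥ* _) ∘ e
    rw [hvecMul, ← hx]
    simp [Function.comp_def]

lemma zero_mem_latticeOf {n : ℕ} (G : Matrix (Fin n) (Fin n) ℤ) : 0 ∈ latticeOf G :=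
  ⟨0, (zero_vecMul G).symm⟩

def finSumFinTwoPowEquiv (m : ℕ) : Fin (2 ^ m) ⊕ Fin (2 ^ m) ≃ Fin (2 ^ (m + 1)) :=
  finSumFinEquiv.trans (finCongr (by rw [pow_succ, mul_two]))

local notation "E" => finSumFinTwoPowEquiv

lemma Hmat_succ (m : ℕ) :
    Hmat (m + 1) = reindex (E m) (E m) (fromBlocks (Hmat m) (Hmat m) 0 (Hmat m)) :=
  rfl

lemma Hmat_succ_apply (m : ℕ) (s t : Fin (2 ^ m) ⊕ Fin (2 ^ m)) :
    Hmat (m + 1) (E m s) (E m t) = fromBlocks (Hmat m) (Hmat m) 0 (Hmat m) s t := by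
  simp [Hmat_succ]

lemma Hmat_apply_self (m : ℕ) (s : Fin (2 ^ m)) : Hmat m s s = 1 := by
  induction m with
  | zero => rfl
  | succ m ih =>
    obtain ⟨t, rfl⟩ := (E m).surjective s
    cases t <;> simp [Hmat_succ_apply, ih]

lemma rowWeight_pos (m : ℕ) (s : Fin (2 ^ m)) : 0 < rowWeight m s :=
  Finset.card_pos.2 ⟨s, by simp [Hmat_apply_self]⟩

lemma rowWeight_succ_inl (m : ℕ) (s : Fin (2 ^ m)) :
    rowWeight (m + 1) (E m (.inl s)) = 2 * rowWeight m s := by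
  simp only [rowWeight, Finset.card_filter]
  rw [← (E m).sum_comp, Fintype.sum_sum_type]
  simp [Hmat_succ_apply, two_mul]

lemma rowWeight_succ_inr (m : ℕ) (s : Fin (2 ^ m)) :
    rowWeight (m + 1) (E m (.inr s)) = rowWeight m s := by
  simp only [rowWeight, Finset.card_filter]
  rw [← (E m).sum_comp, Fintype.sum_sum_type]
  simp [Hmat_succ_apply]

lemma Gmat_zero_apply (j : ℕ) (s t : Fin (2 ^ 0)) : Gmat 0 j s t = 2 ^ j := by
  have : rowWeight 0 s = 1 := rfl
  simp [Gmat, this, Hmat]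

/-- For `j = 0` the truncated `j - 1` is harmless: no row of `Gmat (m + 1) 0` is rescaled. -/
lemma Gmat_succ (m j : ℕ) :
    Gmat (m + 1) j =
      reindex (E m) (E m) (fromBlocks (Gmat m (j - 1)) (Gmat m (j - 1)) 0 (Gmat m j)) := by
  have hlog (s : Fin (2 ^ m)) :
      j - Nat.log 2 (2 * rowWeight m s) = j - 1 - Nat.log 2 (rowWeight m s) := by
    rw [mul_comm, Nat.log_mul_base one_lt_two (rowWeight_pos m s).ne']
    omega
  ext i i'
  obtain ⟨t, rfl⟩ := (E m).surjective i
  obtain ⟨t', rfl⟩ := (E m).surjective i'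
  cases t <;> cases t' <;>
    simp [Gmat, Hmat_succ_apply, rowWeight_succ_inl, rowWeight_succ_inr, hlog]

lemma mem_latticeOf_Gmat_succ_iff (m j : ℕ) (x : Fin (2 ^ (m + 1)) → ℤ) :
    x ∈ latticeOf (Gmat (m + 1) j) ↔
      x ∘ E m ∈ plotkinSum (latticeOf (Gmat m (j - 1))) (latticeOf (Gmat m j)) := by
  rw [Gmat_succ, mem_latticeOf_reindex_fromBlocks_iff]

theorem two_pow_le_sum_abs_of_mem_latticeOf_Gmat (m j : ℕ) {x : Fin (2 ^ m) → ℤ}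
    (hx : x ∈ latticeOf (Gmat m j)) (hx0 : x ≠ 0) : 2 ^ j ≤ ∑ i, |x i| := by
  induction m generalizing j with
  | zero =>
    obtain ⟨u, rfl⟩ := hx
    obtain ⟨i, hi⟩ := Function.ne_iff.1 hx0
    have hdvd : (2 : ℤ) ^ j ∣ (u ᵥ* Gmat 0 j) i := by
      simp only [vecMul, dotProduct, Gmat_zero_apply]
      exact Finset.dvd_sum fun k _ => dvd_mul_left _ _
    calc (2 : ℤ) ^ j ≤ |(u ᵥ* Gmat 0 j) i| :=
          Int.le_of_dvd (abs_pos.2 hi) ((dvd_abs _ _).2 hdvd)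
      _ ≤ ∑ i, |(u ᵥ* Gmat 0 j) i| :=
        Finset.single_le_sum (f := fun i => |(u ᵥ* Gmat 0 j) i|) (fun _ _ => abs_nonneg _)
          (Finset.mem_univ i)
  | succ m ih =>
    have hxE0 : x ∘ E m ≠ 0 := fun h => hx0 <| funext fun i => by
      simpa using congrFun h ((E m).symm i)
    have hA (a) (ha : a ∈ latticeOf (Gmat m (j - 1))) (ha0 : a ≠ 0) :
        (2 : ℤ) ^ j ≤ 2 * ∑ i, |a i| :=
      calc (2 : ℤ) ^ j ≤ 2 * 2 ^ (j - 1) := by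
            rw [← pow_succ']; exact pow_le_pow_right₀ one_le_two (by omega)
        _ ≤ 2 * ∑ i, |a i| := by gcongr; exact ih (j - 1) ha ha0
    calc (2 : ℤ) ^ j ≤ ∑ t, |(x ∘ E m) t| :=
          le_sum_abs_of_mem_plotkinSum hA (fun b hb hb0 => ih j hb hb0)
            ((mem_latticeOf_Gmat_succ_iff m j x).1 hx) hxE0
      _ = ∑ i, |x i| := (E m).sum_comp fun i => |x i|

theorem exists_mem_latticeOf_Gmat_sum_abs_eq (m j : ℕ) (hj : j ≤ m) :
    ∃ x ∈ latticeOf (Gmat m j), ∑ i, |x i| = 2 ^ j := by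
  induction m generalizing j with
  | zero =>
    obtain rfl : j = 0 := Nat.le_zero.1 hj
    exact ⟨fun _ => 1, ⟨fun _ => 1, by ext; simp [vecMul, dotProduct, Gmat_zero_apply]⟩,
      by simp⟩
  | succ m ih =>
    have hlift (y) (hy : y ∈ plotkinSum (latticeOf (Gmat m (j - 1))) (latticeOf (Gmat m j))) :
        ∃ x ∈ latticeOf (Gmat (m + 1) j), ∑ i, |x i| = ∑ t, |y t| :=
      ⟨y ∘ (E m).symm, (mem_latticeOf_Gmat_succ_iff m j _).2 (by simpa [Function.comp_def]),
        (E m).symm.sum_comp fun t => |y t|⟩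
    rcases Nat.lt_or_eq_of_le hj with hj | rfl
    · obtain ⟨b, hb, hbw⟩ := ih j (by omega)
      obtain ⟨x, hx, hxw⟩ := hlift _ ⟨0, zero_mem_latticeOf _, b, hb, rfl⟩
      exact ⟨x, hx, by simp [hxw, hbw]⟩
    · obtain ⟨a, ha, haw⟩ := ih m le_rfl
      obtain ⟨x, hx, hxw⟩ := hlift _ ⟨a, ha, 0, zero_mem_latticeOf _, rfl⟩
      exact ⟨x, hx, by simp [hxw, haw, pow_succ, mul_two]⟩

/-- The minimum Manhattan distance of the lattice `Λ(m, j)` generated by the rows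
of `G(m, j)` equals `2^j`: every nonzero lattice point has Manhattan weight at
least `2^j`, and some lattice point has Manhattan weight exactly `2^j`. -/
theorem min_manhattan_distance_Gmj (m j : ℕ) (hj : j ≤ m) :
    (∀ x ∈ latticeOf (Gmat m j), x ≠ 0 → (2 : ℤ) ^ j ≤ ∑ i, |x i|) ∧
    (∃ x ∈ latticeOf (Gmat m j), (∑ i, |x i|) = (2 : ℤ) ^ j) :=
  ⟨fun _ hx hx0 => two_pow_le_sum_abs_of_mem_latticeOf_Gmat m j hx hx0,
    exists_mem_latticeOf_Gmat_sum_abs_eq m j hj⟩
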